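/- Let G be a group and A a G-module. Define T(G,A) with underlying sets T(g,h) = A × {(g,h)} for g,h ∈ G and operations m((a,(g,h^{-1})),(b,(h,k^{-1})),(c,(h^{-1}g,k^{-1}h))) = (a + (g^{-1}h)·b + c, (g,k^{-1})), P((a,(g,h^{-1}))) = (g·a, (h^{-1},g^{-1}h)), Q((a,(g,h^{-1}))) = (-(g·a), (g^{-1},h^{-1}g)). Then T(G,A) is a Δ-group based at G, i.e., it satisfies P^3 = id, Q^2 = id, P^2Q = QP, P(m(a,b,c)) = m(P(b),P(c),P(a)), Q(m(a,b,c)) = m(Q(a),Q(c),Q(b)), the associativity relation m(m(a,b,c),d,e) = m(a, m(b,d,f), m(c, Q(f), e)), and the inversion relation m(m(f,a,b), P^2Q(a), PQ(b)) = f. -/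
import Mathlib


variable {G A : Type} [Group G] [AddCommGroup A] [DistribMulAction G A]

/- We realize the Δ-group `T(G,A)`: its component `T(g,h)` is `A × {(g,h)}`, so an element
of `T(g,h⁻¹)` is determined by its `A`-component.  The operations below give the
`A`-component of `m`, `P`, `Q`; the indices `(g,h,k)` record which components the
arguments live in, namely `a ∈ T(g,h⁻¹)`, `b ∈ T(h,k⁻¹)`, `c ∈ T(h⁻¹g,k⁻¹h)`,
`m(a,b,c) ∈ T(g,k⁻¹)`, `P : T(g,h⁻¹) → T(h⁻¹,g⁻¹h)`, `Q : T(g,h⁻¹) → T(g⁻¹,h⁻¹g)`. -/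

/-- `m((a,(g,h⁻¹)),(b,(h,k⁻¹)),(c,(h⁻¹g,k⁻¹h))) = (a + (g⁻¹h)•b + c, (g,k⁻¹))`. -/
def mGA (g h _k : G) (a b c : A) : A := a + (g⁻¹ * h) • b + c

/-- `P((a,(g,h⁻¹))) = (g•a, (h⁻¹,g⁻¹h))`. -/
def pGA (g : G) (a : A) : A := g • a

/-- `Q((a,(g,h⁻¹))) = (-(g•a), (g⁻¹,h⁻¹g))`. -/
def qGA (g : G) (a : A) : A := -(g • a)

/-- The structure `T(G,A)` is a Δ-group based at `G`: it satisfies `P³ = id`, `Q² = id`,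
`P²Q = QP`, `P(m(a,b,c)) = m(P(b),P(c),P(a))`, `Q(m(a,b,c)) = m(Q(a),Q(c),Q(b))`,
`m(m(a,b,c),d,e) = m(a,m(b,d,f),m(c,Q(f),e))` and `m(m(f,a,b),P²Q(a),PQ(b)) = f`
(each stated on the `A`-components, with the indices of the components tracked). -/
theorem TGA_is_delta_group :
    -- P³ = id on T(g,h⁻¹)
    (∀ (g h : G) (a : A), pGA (g⁻¹ * h) (pGA h⁻¹ (pGA g a)) = a) ∧
    -- Q² = id on T(g,h⁻¹)
    (∀ (g : G) (a : A), qGA g⁻¹ (qGA g a) = a) ∧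
    -- P²Q = QP on T(g,h⁻¹)
    (∀ (g h : G) (a : A),
      pGA (h⁻¹ * g) (pGA g⁻¹ (qGA g a)) = qGA h⁻¹ (pGA g a)) ∧
    -- P(m(a,b,c)) = m(P(b),P(c),P(a))
    (∀ (g h k : G) (a b c : A),
      pGA g (mGA g h k a b c) =
        mGA k⁻¹ (k⁻¹ * h) (k⁻¹ * g) (pGA h b) (pGA (h⁻¹ * g) c) (pGA g a)) ∧
    -- Q(m(a,b,c)) = m(Q(a),Q(c),Q(b))
    (∀ (g h k : G) (a b c : A),
      qGA g (mGA g h k a b c) =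
        mGA g⁻¹ (g⁻¹ * h) (g⁻¹ * k) (qGA g a) (qGA (h⁻¹ * g) c) (qGA h b)) ∧
    -- m(m(a,b,c),d,e) = m(a,m(b,d,f),m(c,Q(f),e))
    (∀ (g h k l : G) (a b c d e f : A),
      mGA g k l (mGA g h k a b c) d e =
        mGA g h l a (mGA h k l b d f)
          (mGA (h⁻¹ * g) (h⁻¹ * k) (h⁻¹ * l) c (qGA (k⁻¹ * h) f) e)) ∧
    -- m(m(f,a,b),P²Q(a),PQ(b)) = f
    (∀ (g h k : G) (f a b : A),
      mGA g k h (mGA g h k f a b)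
        (pGA (k⁻¹ * h) (pGA h⁻¹ (qGA h a)))
        (pGA (g⁻¹ * h) (qGA (h⁻¹ * g) b)) = f) := by
  refine ⟨?_,?_,?_,?_,?_,?_,?_⟩ <;> intros <;>
    simp [mGA, pGA, qGA, mul_smul, smul_add, smul_neg, mul_assoc] <;> abel
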